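/- arXiv:2010.12187 — 2 statements merged into one kernel-verified Lean document; each statement's English description precedes it below -/
import Mathlib

section
/- Write each B_n in m×m blocks as B_n = [[A_n, C_n],[C_nᵀ, D_n]] and assume I_m + hC_nᵀ is invertible for every n. Then the nullity of the form equals the ω-nullity of the monodromy matrix: m⁰_{h,ω} = dim_ℂ ker(M − ω I_{2m}), where M = S_h(A_{N−1},C_{N−1},D_{N−1})·S_h(A_{N−2},C_{N−2},D_{N−2})⋯S_h(A_0,C_0,D_0). -/
open Matrix

namespace DHS

/-- The ambient space of pairs of sequences `x, y : ℤ → ℂ^m`. -/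
abbrev V (m : ℕ) := (ℤ → Fin m → ℂ) × (ℤ → Fin m → ℂ)

/-- The standard symplectic matrix `J = [[0, -I_m],[I_m, 0]]` in `m × m` blocks. -/
def Jm (m : ℕ) : Matrix (Fin m ⊕ Fin m) (Fin m ⊕ Fin m) ℂ :=
  Matrix.fromBlocks 0 (-1) 1 0

/-- `z_n = (x_n, y_n) ∈ ℂ^{2m}`. -/
def zf {m : ℕ} (z : V m) (n : ℤ) : Fin m ⊕ Fin m → ℂ := Sum.elim (z.1 n) (z.2 n)

/-- `z̃_n = (x_{n+1}, y_n) ∈ ℂ^{2m}`. -/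
def zt {m : ℕ} (z : V m) (n : ℤ) : Fin m ⊕ Fin m → ℂ := Sum.elim (z.1 (n + 1)) (z.2 n)

/-- The standard Hermitian product `⟨u, v⟩ = Σ_i u_i · conj (v_i)` on `ℂ^{2m}`. -/
noncomputable def herm {α : Type} [Fintype α] (u v : α → ℂ) : ℂ :=
  ∑ i, u i * (starRingEnd ℂ) (v i)

/-- The space `W̃_ω` of pairs of sequences with `x_{n+N} = ω x_n`, `y_{n+N} = ω y_n`. -/
noncomputable def Wt (m N : ℕ) (ω : ℂ) : Submodule ℂ (V m) where
  carrier := {z | ∀ n : ℤ, z.1 (n + (N : ℤ)) = ω • z.1 n ∧ z.2 (n + (N : ℤ)) = ω • z.2 n}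
  add_mem' := by
    intro a b ha hb n
    refine ⟨?_, ?_⟩
    · show (a.1 + b.1) (n + (N : ℤ)) = ω • (a.1 + b.1) n
      simp [Pi.add_apply, (ha n).1, (hb n).1, smul_add]
    · show (a.2 + b.2) (n + (N : ℤ)) = ω • (a.2 + b.2) n
      simp [Pi.add_apply, (ha n).2, (hb n).2, smul_add]
  zero_mem' := by intro n; simp
  smul_mem' := by
    intro c a ha n
    refine ⟨?_, ?_⟩
    · show (c • a.1) (n + (N : ℤ)) = ω • (c • a.1) n
      simp [Pi.smul_apply, (ha n).1, smul_comm c ω]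
    · show (c • a.2) (n + (N : ℤ)) = ω • (c • a.2) n
      simp [Pi.smul_apply, (ha n).2, smul_comm c ω]

/-- The form `𝒜_{h,ω}(z̃, w̃) = Σ_{n=1}^{N} [⟨−J(z_{n+1}−z_n)/h, w̃_n⟩ − ⟨B_n z̃_n, w̃_n⟩]`. -/
noncomputable def Aform (m N : ℕ) (h : ℝ)
    (B : ℤ → Matrix (Fin m ⊕ Fin m) (Fin m ⊕ Fin m) ℝ) (z w : V m) : ℂ :=
  ∑ n ∈ Finset.Icc (1 : ℤ) (N : ℤ),
    (herm (((h : ℂ))⁻¹ • ((-(Jm m)).mulVec (zf z (n + 1) - zf z n))) (zt w n)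
      - herm (((B n).map (fun x => (x : ℂ))).mulVec (zt z n)) (zt w n))

lemma herm_add_left {α : Type} [Fintype α] (u v w : α → ℂ) :
    herm (u + v) w = herm u w + herm v w := by
  simp [herm, add_mul, Finset.sum_add_distrib]

lemma herm_smul_left {α : Type} [Fintype α] (c : ℂ) (u w : α → ℂ) :
    herm (c • u) w = c * herm u w := by
  simp [herm, Finset.mul_sum, mul_assoc]

lemma herm_zero_left {α : Type} [Fintype α] (w : α → ℂ) : herm 0 w = 0 := by
  simp [herm]

lemma zf_add {m : ℕ} (a b : V m) (n : ℤ) : zf (a + b) n = zf a n + zf b n := by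
  funext i; cases i <;> rfl

lemma zf_smul {m : ℕ} (c : ℂ) (a : V m) (n : ℤ) : zf (c • a) n = c • zf a n := by
  funext i; cases i <;> rfl

lemma zf_zero {m : ℕ} (n : ℤ) : zf (0 : V m) n = 0 := by
  funext i; cases i <;> rfl

lemma zt_add {m : ℕ} (a b : V m) (n : ℤ) : zt (a + b) n = zt a n + zt b n := by
  funext i; cases i <;> rfl

lemma zt_smul {m : ℕ} (c : ℂ) (a : V m) (n : ℤ) : zt (c • a) n = c • zt a n := by
  funext i; cases i <;> rfl

lemma zt_zero {m : ℕ} (n : ℤ) : zt (0 : V m) n = 0 := by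
  funext i; cases i <;> rfl

lemma Aform_add_left (m N : ℕ) (h : ℝ)
    (B : ℤ → Matrix (Fin m ⊕ Fin m) (Fin m ⊕ Fin m) ℝ) (a b w : V m) :
    Aform m N h B (a + b) w = Aform m N h B a w + Aform m N h B b w := by
  unfold Aform
  rw [← Finset.sum_add_distrib]
  refine Finset.sum_congr rfl fun n _ => ?_
  rw [zf_add, zf_add, zt_add, add_sub_add_comm, Matrix.mulVec_add, smul_add, herm_add_left,
    Matrix.mulVec_add, herm_add_left]
  ring

lemma Aform_smul_left (m N : ℕ) (h : ℝ)
    (B : ℤ → Matrix (Fin m ⊕ Fin m) (Fin m ⊕ Fin m) ℝ) (c : ℂ) (a w : V m) :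
    Aform m N h B (c • a) w = c * Aform m N h B a w := by
  unfold Aform
  rw [Finset.mul_sum]
  refine Finset.sum_congr rfl fun n _ => ?_
  rw [zf_smul, zf_smul, zt_smul, ← smul_sub]
  simp only [Matrix.mulVec_smul, smul_comm ((h : ℂ))⁻¹ c, herm_smul_left]
  ring

lemma Aform_zero_left (m N : ℕ) (h : ℝ)
    (B : ℤ → Matrix (Fin m ⊕ Fin m) (Fin m ⊕ Fin m) ℝ) (w : V m) :
    Aform m N h B (0 : V m) w = 0 := by
  unfold Aform
  refine Finset.sum_eq_zero fun n _ => ?_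
  rw [zf_zero, zf_zero, zt_zero]
  simp [herm_zero_left]

/-- The null space `{z̃ ∈ W̃_ω : 𝒜_{h,ω}(z̃, w̃) = 0 for all w̃ ∈ W̃_ω}`. -/
noncomputable def nullSp (m N : ℕ) (h : ℝ) (ω : ℂ)
    (B : ℤ → Matrix (Fin m ⊕ Fin m) (Fin m ⊕ Fin m) ℝ) : Submodule ℂ (V m) where
  carrier := {z | z ∈ Wt m N ω ∧ ∀ w ∈ Wt m N ω, Aform m N h B z w = 0}
  add_mem' := by
    intro a b ha hb
    exact ⟨(Wt m N ω).add_mem ha.1 hb.1, fun w hw => by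
      rw [Aform_add_left, ha.2 w hw, hb.2 w hw, add_zero]⟩
  zero_mem' := ⟨(Wt m N ω).zero_mem, fun w _ => Aform_zero_left m N h B w⟩
  smul_mem' := by
    intro c a ha
    exact ⟨(Wt m N ω).smul_mem c ha.1, fun w hw => by
      rw [Aform_smul_left, ha.2 w hw, mul_zero]⟩

/-- `m⁰_{h,ω}`: the dimension of the null space of `𝒜_{h,ω}`. -/
noncomputable def mZero (m N : ℕ) (h : ℝ) (ω : ℂ)
    (B : ℤ → Matrix (Fin m ⊕ Fin m) (Fin m ⊕ Fin m) ℝ) : ℕ :=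
  Module.finrank ℂ ↥(nullSp m N h ω B)

/-- `m⁺_{h,ω}`: the maximal dimension of a complex subspace of `W̃_ω` on which
`z̃ ↦ 𝒜_{h,ω}(z̃, z̃)` is positive definite. -/
noncomputable def mPlus (m N : ℕ) (h : ℝ) (ω : ℂ)
    (B : ℤ → Matrix (Fin m ⊕ Fin m) (Fin m ⊕ Fin m) ℝ) : ℕ :=
  sSup {d : ℕ | ∃ S : Submodule ℂ (V m), S ≤ Wt m N ω ∧ Module.finrank ℂ ↥S = d ∧
    ∀ z ∈ S, z ≠ 0 → 0 < (Aform m N h B z z).re}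

/-- `m⁻_{h,ω}`: the maximal dimension of a complex subspace of `W̃_ω` on which
`z̃ ↦ 𝒜_{h,ω}(z̃, z̃)` is negative definite. -/
noncomputable def mMinus (m N : ℕ) (h : ℝ) (ω : ℂ)
    (B : ℤ → Matrix (Fin m ⊕ Fin m) (Fin m ⊕ Fin m) ℝ) : ℕ :=
  sSup {d : ℕ | ∃ S : Submodule ℂ (V m), S ≤ Wt m N ω ∧ Module.finrank ℂ ↥S = d ∧
    ∀ z ∈ S, z ≠ 0 → (Aform m N h B z z).re < 0}


/-- The matrix `S_h(A,C,D)` with blocks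
`[[(I+hCᵀ)⁻¹, −h(I+hCᵀ)⁻¹D],[hA(I+hCᵀ)⁻¹, −h²A(I+hCᵀ)⁻¹D + I + hC]]`. -/
noncomputable def Sh (m : ℕ) (h : ℝ) (A C D : Matrix (Fin m) (Fin m) ℝ) :
    Matrix (Fin m ⊕ Fin m) (Fin m ⊕ Fin m) ℝ :=
  Matrix.fromBlocks (1 + h • Cᵀ)⁻¹ (-(h • ((1 + h • Cᵀ)⁻¹ * D)))
    (h • (A * (1 + h • Cᵀ)⁻¹)) (-((h ^ 2) • (A * (1 + h • Cᵀ)⁻¹ * D)) + 1 + h • C)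

/-- `mono S n = S_h(A_{n−1},C_{n−1},D_{n−1}) ⋯ S_h(A_0,C_0,D_0)`, the discrete
fundamental solution built from the blocks of the coefficient matrices `B_n`. -/
noncomputable def mono (m : ℕ) (h : ℝ)
    (B : ℤ → Matrix (Fin m ⊕ Fin m) (Fin m ⊕ Fin m) ℝ) :
    ℕ → Matrix (Fin m ⊕ Fin m) (Fin m ⊕ Fin m) ℝ
  | 0 => 1
  | n + 1 => Sh m h ((B (n : ℤ)).toBlocks₁₁) ((B (n : ℤ)).toBlocks₁₂)
      ((B (n : ℤ)).toBlocks₂₂) * mono m h B n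

end DHS

/-!
Write `E_n(z̃) = −J(z_{n+1} − z_n)/h − B_n z̃_n`, so that
`𝒜_{h,ω}(z̃, w̃) = Σ_{n=1}^N ⟨E_n(z̃), w̃_n⟩`. Testing against the `ω`-quasi-periodic `w̃` with
`w̃_n = E_n(z̃)` for `1 ≤ n ≤ N` shows that `z̃` is in the null space iff `E_n(z̃) = 0` on that
window, hence (by quasi-periodicity) for all `n`. In blocks, `E_n(z̃) = 0` is a symplectic Euler
step which, as `I + hC_nᵀ` is invertible, reads `z_{n+1} = S_n z_n` with
`S_n = S_h(A_n, C_n, D_n)`. An `ω`-quasi-periodic solution of this recursion is determined by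
`z_0`, which must satisfy `M z_0 = ω z_0`; conversely every such vector spreads to a solution
`z_{qN+k} = ω^q S_{k-1} ⋯ S_0 z_0`. So `z̃ ↦ z_0` identifies the null space with `ker (M − ω)`.
-/

open Matrix Module

lemma Sum.smul_elim {α β γ R : Type*} [SMul R γ] (c : R) (f : α → γ) (g : β → γ) :
    c • Sum.elim f g = Sum.elim (c • f) (c • g) := by
  ext (i | i) <;> rfl

lemma Int.exists_eq_natCast_add_mul {N : ℕ} (hN : 0 < N) (n : ℤ) :
    ∃ k < N, ∃ q : ℤ, n = k + q * N := by
  have := Int.emod_nonneg n (by omega : (N : ℤ) ≠ 0)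
  have := Int.emod_lt_of_pos n (by omega : (0 : ℤ) < N)
  have := Int.mul_ediv_add_emod n N
  exact ⟨(n % N).toNat, by omega, n / N, by rw [Int.toNat_of_nonneg (by omega)]; linarith⟩

lemma Matrix.map_ofReal_smul {ι κ : Type*} (c : ℝ) (X : Matrix ι κ ℝ) :
    (c • X).map (fun x => (x : ℂ)) = (c : ℂ) • X.map (fun x => (x : ℂ)) := by
  ext; simp

lemma Matrix.map_ofReal_mul {ι : Type*} [Fintype ι] (X Y : Matrix ι ι ℝ) :
    (X * Y).map (fun x => (x : ℂ)) = X.map (fun x => (x : ℂ)) * Y.map (fun x => (x : ℂ)) :=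
  Matrix.map_mul (f := Complex.ofRealHom)

section QuasiPeriodic

variable {K M : Type*} [Field K] [AddCommGroup M] [Module K M] {N : ℕ} {c : K} {f : ℤ → M}

lemma quasiPeriodic_add_mul (hc : c ≠ 0) (hf : ∀ n, f (n + N) = c • f n) (q n : ℤ) :
    f (n + q * N) = c ^ q • f n := by
  induction q using Int.induction_on with
  | zero => simp
  | succ k ih => rw [add_one_mul, ← add_assoc, hf, ih, smul_smul, zpow_add_one₀ hc, mul_comm]
  | pred k ih =>
    have h := hf (n + (-k - 1) * N)
    rw [show n + (-k - 1) * N + N = n + -k * N by ring, ih] at h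
    rw [zpow_sub_one₀ hc, mul_comm (c ^ _), ← smul_smul, h, inv_smul_smul₀ hc]

lemma quasiPeriodic_eq_zero (hN : 0 < N) (hc : c ≠ 0) (hf : ∀ n, f (n + N) = c • f n) (a : ℤ)
    (hwin : ∀ n, a ≤ n → n < a + N → f n = 0) (n : ℤ) : f n = 0 := by
  obtain ⟨k, hk, q, hq⟩ := Int.exists_eq_natCast_add_mul hN (n - a)
  rw [show n = a + k + q * N by omega, quasiPeriodic_add_mul hc hf, hwin _ (by omega) (by omega),
    smul_zero]

def quasiPeriodicExtension (N : ℕ) (c : K) (a : ℤ) (g : ℤ → M) (n : ℤ) : M :=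
  c ^ ((n - a) / N) • g (a + (n - a) % N)

lemma quasiPeriodicExtension_add (hN : 0 < N) (hc : c ≠ 0) (a : ℤ) (g : ℤ → M) (n : ℤ) :
    quasiPeriodicExtension N c a g (n + N) = c • quasiPeriodicExtension N c a g n := by
  have hN' : (N : ℤ) ≠ 0 := by omega
  rw [quasiPeriodicExtension, quasiPeriodicExtension, show n + N - a = n - a + 1 * N by ring,
    Int.add_mul_ediv_right _ _ hN', Int.add_mul_emod_self_right, zpow_add_one₀ hc, mul_comm,
    ← smul_smul]

lemma quasiPeriodicExtension_of_mem (c : K) (g : ℤ → M) {a n : ℤ} (h₁ : a ≤ n)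
    (h₂ : n < a + N) : quasiPeriodicExtension N c a g n = g n := by
  rw [quasiPeriodicExtension, Int.ediv_eq_zero_of_lt (by omega) (by omega),
    Int.emod_eq_of_lt (by omega) (by omega), zpow_zero, one_smul, add_sub_cancel]

end QuasiPeriodic

section Floquet

variable {K : Type*} [Field K] {ι : Type*} [Fintype ι] [DecidableEq ι]

def transferProduct (S : ℤ → Matrix ι ι K) : ℕ → Matrix ι ι K
  | 0 => 1
  | k + 1 => S k * transferProduct S k

def floquetSolutions (S : ℤ → Matrix ι ι K) (N : ℕ) (ω : K) : Submodule K (ℤ → ι → K) where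
  carrier := {x | ∀ n, x (n + N) = ω • x n ∧ x (n + 1) = S n *ᵥ x n}
  add_mem' hx hy n := by simp [(hx n).1, (hy n).1, (hx n).2, (hy n).2, mulVec_add]
  zero_mem' n := by simp
  smul_mem' c x hx n := by simp [(hx n).1, (hx n).2, mulVec_smul, smul_comm c ω]

variable {S : ℤ → Matrix ι ι K} {N : ℕ} {ω : K}

namespace floquetSolutions

variable {x : ℤ → ι → K}

lemma apply_natCast (hx : x ∈ floquetSolutions S N ω) (k : ℕ) :
    x k = transferProduct S k *ᵥ x 0 := by
  induction k with
  | zero => simp [transferProduct]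
  | succ k ih => rw [Nat.cast_succ, (hx k).2, ih, transferProduct, mulVec_mulVec]

lemma transferProduct_mulVec_apply_zero (hx : x ∈ floquetSolutions S N ω) :
    transferProduct S N *ᵥ x 0 = ω • x 0 := by
  rw [← apply_natCast hx, ← (hx 0).1, zero_add]

lemma eq_zero_of_apply_zero (hx : x ∈ floquetSolutions S N ω) (hN : 0 < N) (hω : ω ≠ 0)
    (h0 : x 0 = 0) : x = 0 := by
  funext n
  refine quasiPeriodic_eq_zero hN hω (fun n => (hx n).1) 0 (fun k hk _ => ?_) n
  rw [← Int.toNat_of_nonneg hk, apply_natCast hx, h0, mulVec_zero]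

end floquetSolutions

def floquetSolution (S : ℤ → Matrix ι ι K) (N : ℕ) (ω : K) (v : ι → K) (n : ℤ) : ι → K :=
  ω ^ (n / N) • transferProduct S (n % N).toNat *ᵥ v

lemma floquetSolution_natCast_add_mul {k : ℕ} (hk : k < N) (q : ℤ) (v : ι → K) :
    floquetSolution S N ω v (k + q * N) = ω ^ q • transferProduct S k *ᵥ v := by
  have hN : (N : ℤ) ≠ 0 := by omega
  rw [floquetSolution, Int.add_mul_ediv_right _ _ hN, Int.add_mul_emod_self_right,
    Int.ediv_eq_zero_of_lt (by omega) (by omega), Int.emod_eq_of_lt (by omega) (by omega),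
    zero_add, Int.toNat_natCast]

lemma floquetSolution_zero (v : ι → K) : floquetSolution S N ω v 0 = v := by
  simp [floquetSolution, transferProduct]

lemma floquetSolution_mem (hN : 0 < N) (hω : ω ≠ 0) (hS : Function.Periodic S N) {v : ι → K}
    (hv : transferProduct S N *ᵥ v = ω • v) :
    floquetSolution S N ω v ∈ floquetSolutions S N ω := by
  intro n
  obtain ⟨k, hk, q, rfl⟩ := Int.exists_eq_natCast_add_mul hN n
  refine ⟨?_, ?_⟩
  · rw [add_assoc, ← add_one_mul, floquetSolution_natCast_add_mul hk,
      floquetSolution_natCast_add_mul hk, zpow_add_one₀ hω, mul_comm, smul_smul]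
  have hSk : S (k + q * N) = S k := by simpa using hS.int_mul q k
  rw [floquetSolution_natCast_add_mul hk, hSk, mulVec_smul, mulVec_mulVec, ← transferProduct]
  obtain hk' | rfl := (Nat.succ_le_of_lt hk).lt_or_eq
  · rw [add_right_comm, ← Nat.cast_succ, floquetSolution_natCast_add_mul hk']
  · rw [show (k : ℤ) + q * ↑(k + 1) + 1 = ((0 : ℕ) : ℤ) + (q + 1) * ↑(k + 1) by push_cast; ring,
      floquetSolution_natCast_add_mul hN, hv, transferProduct, one_mulVec, smul_smul,
      zpow_add_one₀ hω]

theorem finrank_floquetSolutions (hN : 0 < N) (hω : ω ≠ 0) (hS : Function.Periodic S N) :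
    finrank K (floquetSolutions S N ω) =
      finrank K (LinearMap.ker (mulVecLin (transferProduct S N - ω • 1))) := by
  let eval₀ : floquetSolutions S N ω →ₗ[K]
      LinearMap.ker (mulVecLin (transferProduct S N - ω • 1)) :=
    LinearMap.codRestrict _ ((LinearMap.proj 0).comp (Submodule.subtype _)) fun x => by
      simp [floquetSolutions.transferProduct_mulVec_apply_zero x.2]
  refine LinearEquiv.finrank_eq (LinearEquiv.ofBijective eval₀ ⟨?_, ?_⟩)
  · refine (injective_iff_map_eq_zero eval₀).2 fun x hx => ?_
    exact Subtype.ext (floquetSolutions.eq_zero_of_apply_zero x.2 hN hω (congrArg Subtype.val hx))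
  · rintro ⟨v, hv⟩
    have hv' : transferProduct S N *ᵥ v = ω • v := by
      simpa [sub_mulVec, sub_eq_zero] using hv
    exact ⟨⟨_, floquetSolution_mem hN hω hS hv'⟩, Subtype.ext (floquetSolution_zero v)⟩

end Floquet

section SymplecticEuler

variable {K : Type*} [Field K] {ι : Type*} [Fintype ι] [DecidableEq ι]

/- The block rows read `y' - y = h (A x' + C y)` and `(1 + h Cᵀ) x' = x - h D y`: solve the second
for `x' = G (x - h D y)` and substitute into the first. -/
lemma symplecticEuler_step_iff (h : K) (hh : h ≠ 0) (A C D G : Matrix ι ι K)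
    (hGE : G * (1 + h • Cᵀ) = 1) (hEG : (1 + h • Cᵀ) * G = 1) (x x' y y' : ι → K) :
    h⁻¹ • (fromBlocks 0 1 (-1) 0 *ᵥ (Sum.elim x' y' - Sum.elim x y))
        - fromBlocks A C Cᵀ D *ᵥ Sum.elim x' y = 0 ↔
      Sum.elim x' y' = fromBlocks G (-(h • (G * D))) (h • (A * G))
        (-(h ^ 2 • (A * G * D)) + 1 + h • C) *ᵥ Sum.elim x y := by
  have hx' : -(x' - x) = h • (Cᵀ *ᵥ x' + D *ᵥ y) ↔ x' = G *ᵥ (x - h • D *ᵥ y) := by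
    trans (1 + h • Cᵀ) *ᵥ x' = x - h • D *ᵥ y
    · rw [add_mulVec, one_mulVec, smul_mulVec]
      constructor <;> intro H <;> linear_combination (norm := module) -H
    · constructor
      · intro H; rw [← H, mulVec_mulVec, hGE, one_mulVec]
      · rintro rfl; rw [mulVec_mulVec, hEG, one_mulVec]
  simp only [← Sum.elim_sub_sub, fromBlocks_mulVec, Sum.elim_comp_inl, Sum.elim_comp_inr,
    zero_mulVec, one_mulVec, neg_mulVec, zero_add, add_zero, Sum.smul_elim, ← Sum.elim_zero_zero,
    Sum.elim_eq_iff, inv_smul_eq_iff₀ hh, hx', sub_eq_iff_eq_add']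
  constructor <;> rintro ⟨rfl, rfl⟩ <;>
    simp only [mulVec_add, mulVec_sub, mulVec_smul, mulVec_neg, add_mulVec, smul_mulVec,
      ← mulVec_mulVec, neg_mulVec, one_mulVec] <;>
    exact ⟨by module, by module⟩

end SymplecticEuler

namespace DHS

variable {m N : ℕ} {h : ℝ} {ω : ℂ} {B : ℤ → Matrix (Fin m ⊕ Fin m) (Fin m ⊕ Fin m) ℝ}

lemma herm_eq_dotProduct {α : Type} [Fintype α] (u v : α → ℂ) : herm u v = u ⬝ᵥ star v := rfl

def zfEquiv (m : ℕ) : V m ≃ₗ[ℂ] (ℤ → Fin m ⊕ Fin m → ℂ) where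
  toFun := zf
  invFun x := (fun n => x n ∘ Sum.inl, fun n => x n ∘ Sum.inr)
  map_add' a b := funext (zf_add a b)
  map_smul' c a := funext (zf_smul c a)
  left_inv _ := rfl
  right_inv x := funext fun n => Sum.elim_comp_inl_inr (x n)

lemma mem_Wt_iff {z : V m} : z ∈ Wt m N ω ↔ ∀ n, zf z (n + N) = ω • zf z n := by
  refine forall_congr' fun n => ?_
  rw [zf, zf, Sum.smul_elim, Sum.elim_eq_iff]

lemma zt_add_period {z : V m} (hz : z ∈ Wt m N ω) (n : ℤ) : zt z (n + N) = ω • zt z n := by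
  rw [zt, zt, Sum.smul_elim, add_right_comm, (hz _).1, (hz n).2]

lemma exists_mem_Wt_zt_eq (hN : 0 < N) (hω : ω ≠ 0) (g : ℤ → Fin m ⊕ Fin m → ℂ) :
    ∃ w ∈ Wt m N ω, ∀ n ∈ Finset.Icc (1 : ℤ) N, zt w n = g n := by
  refine ⟨(quasiPeriodicExtension N ω 2 fun k => g (k - 1) ∘ Sum.inl,
    quasiPeriodicExtension N ω 1 fun k => g k ∘ Sum.inr),
    fun n => ⟨quasiPeriodicExtension_add hN hω 2 (fun k => g (k - 1) ∘ Sum.inl) n,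
      quasiPeriodicExtension_add hN hω 1 (fun k => g k ∘ Sum.inr) n⟩,
    fun n hn => ?_⟩
  rw [Finset.mem_Icc] at hn
  dsimp only [zt]
  rw [quasiPeriodicExtension_of_mem _ _ (by omega) (by omega),
    quasiPeriodicExtension_of_mem _ _ (by omega) (by omega), add_sub_cancel_right,
    Sum.elim_comp_inl_inr]

noncomputable def eulerLagrange (m : ℕ) (h : ℝ)
    (B : ℤ → Matrix (Fin m ⊕ Fin m) (Fin m ⊕ Fin m) ℝ) (z : V m) (n : ℤ) : Fin m ⊕ Fin m → ℂ :=
  ((h : ℂ))⁻¹ • ((-(Jm m)).mulVec (zf z (n + 1) - zf z n))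
    - ((B n).map (fun x => (x : ℂ))).mulVec (zt z n)

lemma Aform_eq_sum_eulerLagrange (z w : V m) :
    Aform m N h B z w =
      ∑ n ∈ Finset.Icc (1 : ℤ) N, eulerLagrange m h B z n ⬝ᵥ star (zt w n) := by
  simp only [Aform, eulerLagrange, herm_eq_dotProduct, sub_dotProduct]

lemma eulerLagrange_add_period {z : V m} (hz : z ∈ Wt m N ω) (hB : Function.Periodic B N)
    (n : ℤ) : eulerLagrange m h B z (n + N) = ω • eulerLagrange m h B z n := by
  have hzf := mem_Wt_iff.1 hz
  rw [eulerLagrange, eulerLagrange, hB n, add_right_comm, hzf, hzf, zt_add_period hz,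
    ← smul_sub, mulVec_smul, mulVec_smul, smul_comm, smul_sub]

open scoped ComplexOrder in
lemma forall_Aform_eq_zero_iff (hN : 0 < N) (hω : ω ≠ 0) (z : V m) :
    (∀ w ∈ Wt m N ω, Aform m N h B z w = 0) ↔
      ∀ n ∈ Finset.Icc (1 : ℤ) N, eulerLagrange m h B z n = 0 := by
  refine ⟨fun H => ?_, fun H w _ => ?_⟩
  · obtain ⟨w, hw, hzt⟩ := exists_mem_Wt_zt_eq hN hω (eulerLagrange m h B z)
    have hsum := H w hw
    rw [Aform_eq_sum_eulerLagrange, Finset.sum_congr rfl fun n hn => by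
      rw [hzt n hn, dotProduct_comm], Finset.sum_eq_zero_iff_of_nonneg fun _ _ =>
        dotProduct_star_self_nonneg _] at hsum
    exact fun n hn => dotProduct_star_self_eq_zero.1 (hsum n hn)
  · rw [Aform_eq_sum_eulerLagrange]
    exact Finset.sum_eq_zero fun n hn => by rw [H n hn, zero_dotProduct]

noncomputable def stepMatrix (m : ℕ) (h : ℝ)
    (B : ℤ → Matrix (Fin m ⊕ Fin m) (Fin m ⊕ Fin m) ℝ) (n : ℤ) :
    Matrix (Fin m ⊕ Fin m) (Fin m ⊕ Fin m) ℂ :=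
  (Sh m h (B n).toBlocks₁₁ (B n).toBlocks₁₂ (B n).toBlocks₂₂).map (fun x => (x : ℂ))

lemma stepMatrix_periodic (hB : Function.Periodic B N) :
    Function.Periodic (stepMatrix m h B) N := fun n => by
  rw [stepMatrix, stepMatrix, hB n]

lemma transferProduct_stepMatrix (k : ℕ) :
    transferProduct (stepMatrix m h B) k = (mono m h B k).map (fun x => (x : ℂ)) := by
  induction k with
  | zero => simp [transferProduct, mono]
  | succ k ih => rw [transferProduct, mono, ih, stepMatrix, map_ofReal_mul]

lemma eulerLagrange_eq_zero_iff (hh : h ≠ 0) {n : ℤ} (hBsym : (B n).IsSymm)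
    (hinv : IsUnit (1 + h • ((B n).toBlocks₁₂)ᵀ)) (z : V m) :
    eulerLagrange m h B z n = 0 ↔ zf z (n + 1) = stepMatrix m h B n *ᵥ zf z n := by
  have hC : (B n).toBlocks₁₂ᵀ = (B n).toBlocks₂₁ :=
    (isSymm_fromBlocks_iff.1 (by rwa [fromBlocks_toBlocks])).2.1
  have hB : (B n).map (fun x => (x : ℂ)) = fromBlocks ((B n).toBlocks₁₁.map (↑))
      ((B n).toBlocks₁₂.map (↑)) ((B n).toBlocks₁₂.map (↑))ᵀ ((B n).toBlocks₂₂.map (↑)) := by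
    rw [← transpose_map, ← fromBlocks_map, hC, fromBlocks_toBlocks]
  have hJ : -(Jm m) = fromBlocks 0 1 (-1) 0 := by simp [Jm, fromBlocks_neg]
  have hinv' := (isUnit_iff_isUnit_det _).1 hinv
  have hGE := congrArg (·.map (fun x => (x : ℂ))) (nonsing_inv_mul _ hinv')
  have hEG := congrArg (·.map (fun x => (x : ℂ))) (mul_nonsing_inv _ hinv')
  rw [eulerLagrange, stepMatrix, Sh, hJ, hB]
  simp only [fromBlocks_map, map_ofReal_smul, map_ofReal_mul, Matrix.map_neg _ Complex.ofReal_neg,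
    Matrix.map_add _ Complex.ofReal_add, Matrix.map_one _ Complex.ofReal_zero Complex.ofReal_one,
    Complex.ofReal_pow, transpose_map] at hGE hEG ⊢
  exact symplecticEuler_step_iff (h : ℂ) (Complex.ofReal_ne_zero.2 hh) _ _ _ _ hGE hEG
    (z.1 n) (z.1 (n + 1)) (z.2 n) (z.2 (n + 1))

lemma mem_nullSp_iff (hN : 0 < N) (hω : ω ≠ 0) (hh : h ≠ 0) (hBsym : ∀ n, (B n).IsSymm)
    (hBper : Function.Periodic B N) (hinv : ∀ n, IsUnit (1 + h • ((B n).toBlocks₁₂)ᵀ))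
    (z : V m) :
    z ∈ nullSp m N h ω B ↔ zfEquiv m z ∈ floquetSolutions (stepMatrix m h B) N ω := by
  change z ∈ Wt m N ω ∧ _ ↔ ∀ n, zf z (n + N) = ω • zf z n ∧ zf z (n + 1) = _ *ᵥ zf z n
  simp only [forall_and, ← mem_Wt_iff, forall_Aform_eq_zero_iff hN hω,
    ← eulerLagrange_eq_zero_iff hh (hBsym _) (hinv _)]
  refine and_congr_right fun hz => ⟨fun hEL n => ?_, fun hEL n _ => hEL n⟩
  refine quasiPeriodic_eq_zero hN hω (eulerLagrange_add_period hz hBper) 1 (fun k h₁ h₂ => ?_) n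
  exact hEL k (Finset.mem_Icc.2 ⟨h₁, by omega⟩)

theorem stmt5_general (m N : ℕ) (hN : 1 ≤ N) (h : ℝ) (hh : 0 < h)
    (ω : ℂ) (hω : ‖ω‖ = 1)
    (B : ℤ → Matrix (Fin m ⊕ Fin m) (Fin m ⊕ Fin m) ℝ)
    (hBsym : ∀ n : ℤ, (B n)ᵀ = B n) (hBper : ∀ n : ℤ, B (n + (N : ℤ)) = B n)
    (hinv : ∀ n : ℤ, IsUnit (1 + h • ((B n).toBlocks₁₂)ᵀ)) :
    mZero m N h ω B =
      Module.finrank ℂ ↥(LinearMap.ker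
        (Matrix.mulVecLin ((mono m h B N).map (fun x => (x : ℂ)) - ω • 1))) := by
  have hω₀ : ω ≠ 0 := norm_ne_zero_iff.1 (hω ▸ one_ne_zero)
  have hnull : (nullSp m N h ω B).map (zfEquiv m : V m →ₗ[ℂ] _) =
      floquetSolutions (stepMatrix m h B) N ω := by
    ext x
    rw [Submodule.mem_map_equiv, mem_nullSp_iff hN hω₀ hh.ne' hBsym hBper hinv,
      LinearEquiv.apply_symm_apply]
  rw [mZero, ← (zfEquiv m).finrank_map_eq, hnull,
    finrank_floquetSolutions hN hω₀ (stepMatrix_periodic hBper), transferProduct_stepMatrix]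

/-- the nullity `m⁰_{h,ω}` of the form equals the `ω`-nullity of the
monodromy matrix `M = S_h(A_{N−1},C_{N−1},D_{N−1}) ⋯ S_h(A_0,C_0,D_0)`. -/
theorem stmt5 (m N : ℕ) (hm : 1 ≤ m) (hN : 1 ≤ N) (h : ℝ) (hh : 0 < h)
    (ω : ℂ) (hω : ‖ω‖ = 1)
    (B : ℤ → Matrix (Fin m ⊕ Fin m) (Fin m ⊕ Fin m) ℝ)
    (hBsym : ∀ n : ℤ, (B n)ᵀ = B n) (hBper : ∀ n : ℤ, B (n + (N : ℤ)) = B n)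
    (hinv : ∀ n : ℤ, IsUnit (1 + h • ((B n).toBlocks₁₂)ᵀ)) :
    mZero m N h ω B =
      Module.finrank ℂ ↥(LinearMap.ker
        (Matrix.mulVecLin ((mono m h B N).map (fun x => (x : ℂ)) - ω • 1))) :=
  stmt5_general m N hN h hh ω hω B hBsym hBper hinv

end DHS
end

section
/- Let m ≥ 1 and let γ : [0,1] → {2m×2m real symplectic matrices} be continuous with γ(0) = I_{2m}. Then for every ε > 0 there exists N₀ ∈ ℕ such that for every N ≥ N₀, setting h = 1/N and t_n = n/N, the following holds for each n ∈ {0, 1, …, N−1}: there exist m×m real matrices A_n, C_n, D_n with A_nᵀ = A_n, D_nᵀ = D_n, I_m + hC_nᵀ invertible, γ(t_{n+1})·γ(t_n)⁻¹ = S_h(A_n, C_n, D_n), and max(‖hA_n‖, ‖hC_n‖, ‖hD_n‖) ≤ ε. In particular, every continuous symplectic path starting at the identity agrees at the nodes t_n with the fundamental solution of a discrete linear Hamiltonian system with symmetric coefficient matrices B_n = [[A_n, C_n],[C_nᵀ, D_n]]. -/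
/-!
Write `M = γ(t_{n+1}) γ(t_n)⁻¹` in blocks `[[P, Q], [R, S]]`. Symplecticity of `M` and of `Mᵀ`
gives `RᵀP = PᵀR`, `QPᵀ = PQᵀ` and `PᵀS - RᵀQ = I`, which are exactly the relations making
`M = S_h(A, C, D)` with `hA = RP⁻¹`, `hC = (P⁻¹ - I)ᵀ`, `hD = -P⁻¹Q`, and `A`, `D` symmetric,
once `P` is invertible. Uniform continuity of `(s, t) ↦ γ(s) γ(t)⁻¹` on `[0,1]²` makes
`‖M - I‖` small for large `N`; then `P` is a small perturbation of `I`, and each of `hA`, `hC`,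
`hD` has norm at most `2‖M - I‖`.
-/

open Matrix
open scoped Matrix.Norms.L2Operator

/-- The standard symplectic matrix `J = [[0, -I_m],[I_m, 0]]` in `m × m` blocks. -/
def Jmat (m : ℕ) : Matrix (Fin m ⊕ Fin m) (Fin m ⊕ Fin m) ℝ :=
  Matrix.fromBlocks 0 (-1) 1 0

/-- A `2m × 2m` real matrix `M` is symplectic iff `Mᵀ * J * M = J`. -/
def IsSymplectic {m : ℕ} (M : Matrix (Fin m ⊕ Fin m) (Fin m ⊕ Fin m) ℝ) : Prop :=
  Mᵀ * Jmat m * M = Jmat m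

/-- The matrix `S_h(A,C,D)` with blocks
`[[(I+hCᵀ)⁻¹, −h(I+hCᵀ)⁻¹D],[hA(I+hCᵀ)⁻¹, −h²A(I+hCᵀ)⁻¹D + I + hC]]`. -/
noncomputable def Sh (m : ℕ) (h : ℝ) (A C D : Matrix (Fin m) (Fin m) ℝ) :
    Matrix (Fin m ⊕ Fin m) (Fin m ⊕ Fin m) ℝ :=
  Matrix.fromBlocks (1 + h • Cᵀ)⁻¹ (-(h • ((1 + h • Cᵀ)⁻¹ * D)))
    (h • (A * (1 + h • Cᵀ)⁻¹)) (-((h ^ 2) • (A * (1 + h • Cᵀ)⁻¹ * D)) + 1 + h • C)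

open Set

theorem Ring.inverse_sub_one_eq {R : Type*} [Ring R] {x : R} (hx : IsUnit x) :
    Ring.inverse x - 1 = Ring.inverse x * (1 - x) := by
  rw [mul_sub, mul_one, Ring.inverse_mul_cancel x hx]

section NormedRing

variable {R : Type*} [NormedRing R] [CompleteSpace R] {x : R}

theorem isUnit_of_norm_one_sub_lt_one (hx : ‖1 - x‖ < 1) : IsUnit x := by
  simpa using (Units.oneSub (1 - x) hx).isUnit

variable [NormOneClass R]

theorem norm_inverse_le_two (hx : ‖1 - x‖ ≤ 1 / 2) : ‖Ring.inverse x‖ ≤ 2 := by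
  have hu := isUnit_of_norm_one_sub_lt_one (hx.trans_lt (by norm_num))
  have h : ‖Ring.inverse x‖ ≤ 1 + ‖Ring.inverse x‖ * ‖1 - x‖ :=
    calc ‖Ring.inverse x‖ = ‖1 + Ring.inverse x * (1 - x)‖ := by
          rw [← Ring.inverse_sub_one_eq hu, add_sub_cancel]
      _ ≤ ‖(1 : R)‖ + ‖Ring.inverse x * (1 - x)‖ := norm_add_le _ _
      _ ≤ 1 + ‖Ring.inverse x‖ * ‖1 - x‖ := by rw [norm_one]; gcongr; exact norm_mul_le _ _
  nlinarith [norm_nonneg (Ring.inverse x)]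

theorem norm_inverse_sub_one_le (hx : ‖1 - x‖ ≤ 1 / 2) :
    ‖Ring.inverse x - 1‖ ≤ 2 * ‖1 - x‖ := by
  rw [Ring.inverse_sub_one_eq (isUnit_of_norm_one_sub_lt_one (hx.trans_lt (by norm_num)))]
  exact (norm_mul_le _ _).trans (by gcongr; exact norm_inverse_le_two hx)

end NormedRing

namespace Matrix

section L2OpNorm

variable {𝕜 : Type*} [RCLike 𝕜] {k l n o : Type*} [Fintype k] [Fintype l] [Fintype n] [Fintype o]
  [DecidableEq k] [DecidableEq l] [DecidableEq n] [DecidableEq o]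

theorem l2_opNorm_one_le : ‖(1 : Matrix n n 𝕜)‖ ≤ 1 := by
  rw [← l2_opNorm_toEuclideanCLM, map_one]
  exact ContinuousLinearMap.norm_id_le

theorem l2_opNorm_one_submatrix_le {f : n → k} (hf : Function.Injective f) :
    ‖(1 : Matrix k k 𝕜).submatrix f id‖ ≤ 1 := by
  set U := (1 : Matrix k k 𝕜).submatrix f id
  have hU : U * Uᴴ = 1 := by
    ext i j
    simp [U, mul_apply, one_apply, hf.eq_iff]
  have h := l2_opNorm_conjTranspose_mul_self Uᴴ
  rw [conjTranspose_conjTranspose, hU, l2_opNorm_conjTranspose] at h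
  nlinarith [l2_opNorm_one_le (n := n) (𝕜 := 𝕜), norm_nonneg U]

theorem l2_opNorm_submatrix_le (X : Matrix k l 𝕜) {f : n → k} {g : o → l}
    (hf : Function.Injective f) (hg : Function.Injective g) : ‖X.submatrix f g‖ ≤ ‖X‖ := by
  set U := (1 : Matrix k k 𝕜).submatrix f id
  set V := (1 : Matrix l l 𝕜).submatrix g id
  have hX : X.submatrix f g = U * X * Vᴴ := by
    ext i j
    simp [U, V, mul_apply, one_apply]
  calc ‖X.submatrix f g‖ ≤ ‖U‖ * ‖X‖ * ‖Vᴴ‖ := by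
        rw [hX]
        exact (l2_opNorm_mul _ _).trans (by gcongr; exact l2_opNorm_mul _ _)
    _ ≤ 1 * ‖X‖ * 1 := by
        rw [l2_opNorm_conjTranspose]
        gcongr
        exacts [l2_opNorm_one_submatrix_le hf, l2_opNorm_one_submatrix_le hg]
    _ = ‖X‖ := by ring

theorem l2_opNorm_toBlocks₁₁_le (M : Matrix (n ⊕ o) (k ⊕ l) 𝕜) : ‖M.toBlocks₁₁‖ ≤ ‖M‖ :=
  l2_opNorm_submatrix_le M Sum.inl_injective Sum.inl_injective

theorem l2_opNorm_toBlocks₁₂_le (M : Matrix (n ⊕ o) (k ⊕ l) 𝕜) : ‖M.toBlocks₁₂‖ ≤ ‖M‖ :=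
  l2_opNorm_submatrix_le M Sum.inl_injective Sum.inr_injective

theorem l2_opNorm_toBlocks₂₁_le (M : Matrix (n ⊕ o) (k ⊕ l) 𝕜) : ‖M.toBlocks₂₁‖ ≤ ‖M‖ :=
  l2_opNorm_submatrix_le M Sum.inr_injective Sum.inl_injective

theorem l2_opNorm_transpose (A : Matrix k l ℝ) : ‖Aᵀ‖ = ‖A‖ := by
  rw [← conjTranspose_eq_transpose_of_trivial, l2_opNorm_conjTranspose]

end L2OpNorm

theorem isSymm_mul_nonsing_inv {R : Type*} [CommRing R] {n : Type*} [Fintype n] [DecidableEq n]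
    {P Q : Matrix n n R} (hP : IsUnit P.det) (h : Qᵀ * P = Pᵀ * Q) : (Q * P⁻¹).IsSymm := by
  have hPt : IsUnit Pᵀ.det := by rwa [det_transpose]
  calc (Q * P⁻¹)ᵀ = (Pᵀ)⁻¹ * (Qᵀ * P) * P⁻¹ := by
        rw [transpose_mul, transpose_nonsing_inv, Matrix.mul_assoc (Pᵀ)⁻¹,
          mul_nonsing_inv_cancel_right _ _ hP]
    _ = Q * P⁻¹ := by rw [h, nonsing_inv_mul_cancel_left _ _ hPt]

end Matrix

theorem ContinuousOn.matrix_inv {X 𝕜 : Type*} [TopologicalSpace X] [Field 𝕜] [TopologicalSpace 𝕜]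
    [IsTopologicalDivisionRing 𝕜] {n : Type*} [Fintype n] [DecidableEq n]
    {f : X → Matrix n n 𝕜} {s : Set X} (hf : ContinuousOn f s) (hu : ∀ x ∈ s, IsUnit (f x).det) :
    ContinuousOn (fun x => (f x)⁻¹) s := fun x hx =>
  (continuousAt_matrix_inv _ (by
    rw [Ring.inverse_eq_inv']
    exact continuousAt_inv₀ (hu x hx).ne_zero)).comp_continuousWithinAt (hf x hx)

theorem natCast_div_mem_Icc {j N : ℕ} (h : j ≤ N) : (j : ℝ) / N ∈ Icc (0 : ℝ) 1 :=
  ⟨by positivity, div_le_one_of_le₀ (by exact_mod_cast h) (Nat.cast_nonneg N)⟩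

theorem exists_nat_forall_norm_mul_inv_sub_one_lt {𝕜 : Type*} [RCLike 𝕜] {n : Type*} [Fintype n]
    [DecidableEq n] {γ : ℝ → Matrix n n 𝕜} (hγ : ContinuousOn γ (Icc 0 1))
    (hu : ∀ t ∈ Icc (0 : ℝ) 1, IsUnit (γ t).det) {η : ℝ} (hη : 0 < η) :
    ∃ N₀ : ℕ, ∀ N : ℕ, N₀ ≤ N → ∀ k : ℕ, k < N →
      ‖γ (((k : ℝ) + 1) / N) * (γ ((k : ℝ) / N))⁻¹ - 1‖ < η := by
  have hg : ContinuousOn (fun p : ℝ × ℝ => γ p.1 * (γ p.2)⁻¹) (Icc 0 1 ×ˢ Icc 0 1) :=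
    (hγ.comp continuousOn_fst fun p hp => hp.1).mul
      ((hγ.comp continuousOn_snd fun p hp => hp.2).matrix_inv fun p hp => hu _ hp.2)
  obtain ⟨δ, hδ, hgδ⟩ := Metric.uniformContinuousOn_iff.mp
    ((isCompact_Icc.prod isCompact_Icc).uniformContinuousOn_of_continuous hg) η hη
  obtain ⟨N₀, hN₀⟩ := exists_nat_one_div_lt hδ
  refine ⟨N₀ + 1, fun N hN k hk => ?_⟩
  have hk₀ : (k : ℝ) / N ∈ Icc (0 : ℝ) 1 := natCast_div_mem_Icc hk.le
  have hk₁ : ((k : ℝ) + 1) / N ∈ Icc (0 : ℝ) 1 := by exact_mod_cast natCast_div_mem_Icc hk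
  have hdist : dist (((k : ℝ) + 1) / N, (k : ℝ) / N) ((k : ℝ) / N, (k : ℝ) / N) < δ := by
    have hN' : (N₀ : ℝ) + 1 ≤ N := by exact_mod_cast hN
    have hNpos : (0 : ℝ) < N := by linarith
    rw [Prod.dist_eq, dist_self, max_eq_left dist_nonneg, Real.dist_eq, ← sub_div,
      add_sub_cancel_left, abs_of_pos (by positivity)]
    exact (one_div_le_one_div_of_le (by positivity) hN').trans_lt hN₀
  simpa [dist_eq_norm, mul_nonsing_inv _ (hu _ hk₀)] using hgδ _ ⟨hk₁, hk₀⟩ _ ⟨hk₀, hk₀⟩ hdist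

section Symplectic

variable {m : ℕ} {M N : Matrix (Fin m ⊕ Fin m) (Fin m ⊕ Fin m) ℝ}

theorem isSymplectic_iff_mem_symplecticGroup : IsSymplectic M ↔ M ∈ symplecticGroup (Fin m) ℝ :=
  SymplecticGroup.mem_iff'.symm

theorem IsSymplectic.isUnit_det (hM : IsSymplectic M) : IsUnit M.det :=
  SymplecticGroup.symplectic_det (isSymplectic_iff_mem_symplecticGroup.mp hM)

theorem IsSymplectic.transpose (hM : IsSymplectic M) : IsSymplectic Mᵀ :=
  isSymplectic_iff_mem_symplecticGroup.mpr
    (SymplecticGroup.transpose_mem (isSymplectic_iff_mem_symplecticGroup.mp hM))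

theorem IsSymplectic.mul_inv (hM : IsSymplectic M) (hN : IsSymplectic N) :
    IsSymplectic (M * N⁻¹) := by
  rw [isSymplectic_iff_mem_symplecticGroup] at *
  have h := (⟨M, hM⟩ * ⟨N, hN⟩⁻¹ : symplecticGroup (Fin m) ℝ).2
  rwa [Submonoid.coe_mul, SymplecticGroup.coe_inv'] at h

theorem IsSymplectic.of_fromBlocks {P Q R S : Matrix (Fin m) (Fin m) ℝ}
    (h : IsSymplectic (fromBlocks P Q R S)) : Rᵀ * P = Pᵀ * R ∧ Pᵀ * S = 1 + Rᵀ * Q := by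
  simp only [IsSymplectic, Jmat, fromBlocks_transpose, fromBlocks_multiply, fromBlocks_inj,
    Matrix.mul_zero, Matrix.mul_one, Matrix.mul_neg, zero_add, add_zero] at h
  obtain ⟨h₁₁, h₁₂, -, -⟩ := h
  refine ⟨?_, ?_⟩
  · rwa [Matrix.neg_mul, ← sub_eq_add_neg, sub_eq_zero] at h₁₁
  · rw [← neg_neg (1 : Matrix (Fin m) (Fin m) ℝ), ← h₁₂, Matrix.neg_mul]
    abel

theorem IsSymplectic.isSymm_fromBlocks {P Q R S : Matrix (Fin m) (Fin m) ℝ}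
    (h : IsSymplectic (fromBlocks P Q R S)) (hP : IsUnit P.det) :
    (R * P⁻¹).IsSymm ∧ (P⁻¹ * Q).IsSymm := by
  have hPt : IsUnit Pᵀ.det := by rwa [det_transpose]
  have hQP := (fromBlocks_transpose P Q R S ▸ h.transpose).of_fromBlocks.1
  refine ⟨isSymm_mul_nonsing_inv hP h.of_fromBlocks.1, ?_⟩
  simpa [IsSymm, transpose_mul, transpose_nonsing_inv, eq_comm] using
    isSymm_mul_nonsing_inv hPt hQP

end Symplectic

theorem Sh_eq_Sh_one (m : ℕ) {h : ℝ} (A C D : Matrix (Fin m) (Fin m) ℝ) :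
    Sh m h A C D = Sh m 1 (h • A) (h • C) (h • D) := by
  simp only [Sh, transpose_smul, one_mul, Matrix.smul_mul, Matrix.mul_smul, smul_smul,
    pow_two]

theorem fromBlocks_eq_Sh_one {m : ℕ} {P Q R S : Matrix (Fin m) (Fin m) ℝ} (hP : IsUnit P.det)
    (hRP : Rᵀ * P = Pᵀ * R) (hPS : Pᵀ * S = 1 + Rᵀ * Q) :
    fromBlocks P Q R S = Sh m 1 (R * P⁻¹) (P⁻¹ - 1)ᵀ (-(P⁻¹ * Q)) := by
  have hPt : IsUnit Pᵀ.det := by rwa [det_transpose]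
  have hS : S = R * P⁻¹ * Q + (Pᵀ)⁻¹ :=
    calc S = (Pᵀ)⁻¹ * (Pᵀ * S) := (nonsing_inv_mul_cancel_left _ _ hPt).symm
      _ = (R * P⁻¹)ᵀ * Q + (Pᵀ)⁻¹ := by
        rw [hPS, Matrix.mul_add, Matrix.mul_one, transpose_mul, transpose_nonsing_inv,
          Matrix.mul_assoc, add_comm]
      _ = R * P⁻¹ * Q + (Pᵀ)⁻¹ := by rw [(isSymm_mul_nonsing_inv hP hRP).eq]
  have hC : 1 + (1 : ℝ) • ((P⁻¹ - 1)ᵀ)ᵀ = P⁻¹ := by simp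
  rw [Sh, hC, nonsing_inv_nonsing_inv _ hP, fromBlocks_inj]
  refine ⟨rfl, ?_, ?_, ?_⟩
  · simp [mul_nonsing_inv_cancel_left _ _ hP]
  · simp [nonsing_inv_mul_cancel_right _ _ hP]
  · simp only [one_pow, nonsing_inv_mul_cancel_right _ _ hP, Matrix.mul_neg, smul_neg, one_smul,
      neg_neg, transpose_sub, transpose_one, add_add_sub_cancel]
    rwa [← Matrix.mul_assoc, transpose_nonsing_inv]

theorem IsSymplectic.exists_eq_Sh {m : ℕ} [Nonempty (Fin m)]
    {M : Matrix (Fin m ⊕ Fin m) (Fin m ⊕ Fin m) ℝ} (hM : IsSymplectic M) {h : ℝ} (hh : h ≠ 0)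
    (hM₁ : ‖M - 1‖ ≤ 1 / 2) :
    ∃ A C D : Matrix (Fin m) (Fin m) ℝ, Aᵀ = A ∧ Dᵀ = D ∧ IsUnit (1 + h • Cᵀ) ∧
      M = Sh m h A C D ∧
      ‖h • A‖ ≤ 2 * ‖M - 1‖ ∧ ‖h • C‖ ≤ 2 * ‖M - 1‖ ∧ ‖h • D‖ ≤ 2 * ‖M - 1‖ := by
  obtain ⟨P, Q, R, S, rfl⟩ : ∃ P Q R S, M = fromBlocks P Q R S :=
    ⟨_, _, _, _, (fromBlocks_toBlocks M).symm⟩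
  have hsub : fromBlocks P Q R S - 1 = fromBlocks (P - 1) Q R (S - 1) := by
    ext (i | i) (j | j) <;> simp [one_apply]
  rw [hsub] at hM₁ ⊢
  set δ := ‖fromBlocks (P - 1) Q R (S - 1)‖
  have hP₁ : ‖1 - P‖ ≤ δ := by
    simpa [norm_sub_rev] using l2_opNorm_toBlocks₁₁_le (fromBlocks (P - 1) Q R (S - 1))
  have hQ : ‖Q‖ ≤ δ := by
    simpa using l2_opNorm_toBlocks₁₂_le (fromBlocks (P - 1) Q R (S - 1))
  have hR : ‖R‖ ≤ δ := by
    simpa using l2_opNorm_toBlocks₂₁_le (fromBlocks (P - 1) Q R (S - 1))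
  have hP : IsUnit P.det :=
    (isUnit_iff_isUnit_det P).mp (isUnit_of_norm_one_sub_lt_one (by linarith))
  have hPinv : ‖P⁻¹‖ ≤ 2 := by
    rw [nonsing_inv_eq_ringInverse]
    exact norm_inverse_le_two (by linarith)
  have hPinv₁ : ‖P⁻¹ - 1‖ ≤ 2 * δ := by
    rw [nonsing_inv_eq_ringInverse]
    exact (norm_inverse_sub_one_le (by linarith)).trans (by linarith)
  obtain ⟨hRP, hPS⟩ := hM.of_fromBlocks
  obtain ⟨hA, hD⟩ := hM.isSymm_fromBlocks hP
  refine ⟨h⁻¹ • (R * P⁻¹), h⁻¹ • (P⁻¹ - 1)ᵀ, h⁻¹ • -(P⁻¹ * Q), ?_, ?_, ?_, ?_, ?_, ?_, ?_⟩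
  · rw [transpose_smul, hA.eq]
  · rw [transpose_smul, transpose_neg, hD.eq]
  · rw [transpose_smul, smul_inv_smul₀ hh, transpose_transpose, add_sub_cancel]
    exact (isUnit_iff_isUnit_det _).mpr (isUnit_nonsing_inv_det P hP)
  · rw [Sh_eq_Sh_one, smul_inv_smul₀ hh, smul_inv_smul₀ hh, smul_inv_smul₀ hh]
    exact fromBlocks_eq_Sh_one hP hRP hPS
  · rw [smul_inv_smul₀ hh]
    calc ‖R * P⁻¹‖ ≤ ‖R‖ * ‖P⁻¹‖ := norm_mul_le _ _
      _ ≤ δ * 2 := by gcongr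
      _ = 2 * δ := mul_comm _ _
  · rwa [smul_inv_smul₀ hh, l2_opNorm_transpose]
  · rw [smul_inv_smul₀ hh, norm_neg]
    calc ‖P⁻¹ * Q‖ ≤ ‖P⁻¹‖ * ‖Q‖ := norm_mul_le _ _
      _ ≤ 2 * δ := by gcongr

theorem stmt17_general (m : ℕ) (hm : 1 ≤ m)
    (γ : ℝ → Matrix (Fin m ⊕ Fin m) (Fin m ⊕ Fin m) ℝ)
    (hγcont : ContinuousOn γ (Set.Icc (0 : ℝ) 1))
    (hγsymp : ∀ t ∈ Set.Icc (0 : ℝ) 1, IsSymplectic (γ t)) :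
    ∀ ε > (0 : ℝ), ∃ N₀ : ℕ, ∀ N : ℕ, N₀ ≤ N → ∀ n : ℕ, n < N →
      ∃ A C D : Matrix (Fin m) (Fin m) ℝ,
        Aᵀ = A ∧ Dᵀ = D ∧ IsUnit (1 + (1 / (N : ℝ)) • Cᵀ) ∧
        γ (((n : ℝ) + 1) / N) * (γ ((n : ℝ) / N))⁻¹ = Sh m (1 / (N : ℝ)) A C D ∧
        ‖(1 / (N : ℝ)) • A‖ ≤ ε ∧ ‖(1 / (N : ℝ)) • C‖ ≤ ε ∧ ‖(1 / (N : ℝ)) • D‖ ≤ ε := by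
  intro ε hε
  have : Nonempty (Fin m) := ⟨⟨0, hm⟩⟩
  obtain ⟨N₀, hN₀⟩ := exists_nat_forall_norm_mul_inv_sub_one_lt hγcont
    (fun t ht => (hγsymp t ht).isUnit_det) (lt_min one_half_pos (half_pos hε))
  refine ⟨max N₀ 1, fun N hN n hn => ?_⟩
  have hM₁ := (hN₀ N (le_of_max_le_left hN) n hn).le
  have hM : IsSymplectic (γ (((n : ℝ) + 1) / N) * (γ ((n : ℝ) / N))⁻¹) :=
    (hγsymp _ (by exact_mod_cast natCast_div_mem_Icc hn)).mul_inv
      (hγsymp _ (natCast_div_mem_Icc hn.le))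
  have hN : (1 / (N : ℝ)) ≠ 0 := one_div_ne_zero (Nat.cast_ne_zero.mpr (by omega))
  obtain ⟨A, C, D, hA, hD, hC, hS, hnA, hnC, hnD⟩ :=
    hM.exists_eq_Sh hN (hM₁.trans (min_le_left _ _))
  have hε₂ : 2 * ‖γ (((n : ℝ) + 1) / N) * (γ ((n : ℝ) / N))⁻¹ - 1‖ ≤ ε := by
    linarith [hM₁.trans (min_le_right _ _)]
  exact ⟨A, C, D, hA, hD, hC, hS, hnA.trans hε₂, hnC.trans hε₂, hnD.trans hε₂⟩

/-- every continuous symplectic path starting at the identity can be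
interpolated, at the nodes `t_n = n/N` for `N` large, by discrete transition matrices
`S_h(A_n, C_n, D_n)` with symmetric data which is small of order `ε`; the norm `‖·‖`
is the `L²`-operator norm on matrices. -/
theorem stmt17 (m : ℕ) (hm : 1 ≤ m)
    (γ : ℝ → Matrix (Fin m ⊕ Fin m) (Fin m ⊕ Fin m) ℝ)
    (hγcont : ContinuousOn γ (Set.Icc (0 : ℝ) 1))
    (hγ0 : γ 0 = 1)
    (hγsymp : ∀ t ∈ Set.Icc (0 : ℝ) 1, IsSymplectic (γ t)) :
    ∀ ε > (0 : ℝ), ∃ N₀ : ℕ, ∀ N : ℕ, N₀ ≤ N → ∀ n : ℕ, n < N →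
      ∃ A C D : Matrix (Fin m) (Fin m) ℝ,
        Aᵀ = A ∧ Dᵀ = D ∧ IsUnit (1 + (1 / (N : ℝ)) • Cᵀ) ∧
        γ (((n : ℝ) + 1) / N) * (γ ((n : ℝ) / N))⁻¹ = Sh m (1 / (N : ℝ)) A C D ∧
        ‖(1 / (N : ℝ)) • A‖ ≤ ε ∧ ‖(1 / (N : ℝ)) • C‖ ≤ ε ∧ ‖(1 / (N : ℝ)) • D‖ ≤ ε :=
  stmt17_general m hm γ hγcont hγsymp
end
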